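/- The bound k = (2−α)/α is tight: for every α ∈ (0,1] there exist axis-aligned rectangles R_PR ⊆ R_GT with IoU(R_PR, R_GT) = α such that for every k' < (2−α)/α the k'-expansion of R_PR does not contain R_GT. -/
import Mathlib


/-- Axis-aligned rectangle with center `(x, y)`, half-width `w`, half-height `h`. -/
def rect (x y w h : ℝ) : Set (ℝ × ℝ) :=
  {p | |p.1 - x| ≤ w ∧ |p.2 - y| ≤ h}

/-- Area of a planar set, via 2-dimensional Lebesgue measure. -/
noncomputable def area (S : Set (ℝ × ℝ)) : ℝ := (MeasureTheory.volume S).toReal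

/-- Intersection-over-Union of two planar sets. -/
noncomputable def iou (A B : Set (ℝ × ℝ)) : ℝ := area (A ∩ B) / area (A ∪ B)

lemma rect_eq (x y w h : ℝ) :
    rect x y w h = Set.Icc (x - w) (x + w) ×ˢ Set.Icc (y - h) (y + h) := by
  ext ⟨a, b⟩
  simp only [rect, Set.mem_setOf_eq, Set.mem_prod, Set.mem_Icc, abs_le]
  constructor
  · rintro ⟨⟨h1, h2⟩, h3, h4⟩
    exact ⟨⟨by linarith, by linarith⟩, by linarith, by linarith⟩
  · rintro ⟨⟨h1, h2⟩, h3, h4⟩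
    exact ⟨⟨by linarith, by linarith⟩, by linarith, by linarith⟩

lemma area_rect (x y w h : ℝ) (hw : 0 ≤ w) (hh : 0 ≤ h) :
    area (rect x y w h) = (2 * w) * (2 * h) := by
  rw [rect_eq, area, MeasureTheory.Measure.volume_eq_prod,
    MeasureTheory.Measure.prod_prod, Real.volume_Icc, Real.volume_Icc]
  rw [show x + w - (x - w) = 2 * w by ring, show y + h - (y - h) = 2 * h by ring,
    ← ENNReal.ofReal_mul (by positivity)]
  exact ENNReal.toReal_ofReal (by positivity)

/-- Tightness of the bound `k = (2-α)/α`: for every `α ∈ (0,1]` there exist axis-aligned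
rectangles `R_PR ⊆ R_GT` with `IoU = α` such that no `k'`-expansion with `k' < (2-α)/α`
of `R_PR` contains `R_GT`. -/
theorem expansion_bound_tight (α : ℝ) (hα : 0 < α) (hα1 : α ≤ 1) :
    ∃ px py pw ph gx gy gw gh : ℝ,
      0 < pw ∧ 0 < ph ∧ 0 < gw ∧ 0 < gh ∧
      rect px py pw ph ⊆ rect gx gy gw gh ∧
      iou (rect px py pw ph) (rect gx gy gw gh) = α ∧
      ∀ k' : ℝ, k' < (2 - α) / α →
        ¬ rect gx gy gw gh ⊆ rect px py (k' * pw) (k' * ph) := by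
  refine ⟨α, 1, α, 1, 1, 1, 1, 1, hα, one_pos, one_pos, one_pos, ?_, ?_, ?_⟩
  · rintro ⟨a, b⟩ ⟨h1, h2⟩
    rw [abs_le] at h1 h2
    simp only [rect, Set.mem_setOf_eq, abs_le]
    exact ⟨⟨by linarith [h1.1], by linarith [h1.2]⟩, h2⟩
  · have hsub : rect α 1 α 1 ⊆ rect 1 1 1 1 := by
      rintro ⟨a, b⟩ ⟨h1, h2⟩
      rw [abs_le] at h1 h2
      simp only [rect, Set.mem_setOf_eq, abs_le]
      exact ⟨⟨by linarith [h1.1], by linarith [h1.2]⟩, h2⟩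
    rw [iou, Set.inter_eq_left.mpr hsub, Set.union_eq_right.mpr hsub,
      area_rect _ _ _ _ hα.le zero_le_one, area_rect _ _ _ _ zero_le_one zero_le_one]
    field_simp
  · intro k' hk' hsub
    have hmem : ((2 : ℝ), (1 : ℝ)) ∈ rect 1 1 1 1 := by
      constructor <;> simp [abs_le] <;> norm_num
    obtain ⟨h1, -⟩ := hsub hmem
    simp only [abs_le] at h1
    norm_num at h1
    have hk2 : k' * α < 2 - α := (lt_div_iff₀ hα).mp hk'
    linarith [h1.2]
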